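/- Let Q̄ be the law of the scaled neutral Wright–Fisher diffusion dM_t = √(M_t(1−M_t)/(1−t)) dB_t with M_0 = x₀ ∈ (0,1), and Σ_t = M_t(1−M_t)/(1−t). Then E_{Q̄}[∫_0^1 Σ_t^{3/2} dt] < ∞. -/

import Mathlib

/-!
Apply the martingale problem to `f(x) = x(1 - x)`, whose second derivative is `-2`: taking
expectations, `h(t) = E[M_t(1 - M_t)]` solves `h(t) = x₀(1 - x₀) - ∫_0^t h(r)/(1 - r) dr`, so
`h(t) = x₀(1 - x₀)(1 - t)` and `E[Σ_t] = x₀(1 - x₀)` for every `t < 1`. Since `M_t(1 - M_t) ≤ 1`,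
`Σ_t ≤ (1 - t)⁻¹`, hence `Σ_t^{3/2} ≤ Σ_t / √(1 - t)` and `E[Σ_t^{3/2}] ≤ x₀(1 - x₀) / √(1 - t)`,
which is integrable on `(0, 1)`. Tonelli concludes.
-/

open MeasureTheory Set

lemma mul_one_sub_le_one (x : ℝ) : x * (1 - x) ≤ 1 := by
  nlinarith [sq_nonneg (x - 1 / 2)]

lemma norm_mul_one_sub_le_one {x : ℝ} (hx : x ∈ Icc (0 : ℝ) 1) : ‖x * (1 - x)‖ ≤ 1 := by
  rw [Real.norm_of_nonneg (mul_nonneg hx.1 (sub_nonneg.2 hx.2))]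
  exact mul_one_sub_le_one x

lemma contDiff_mul_one_sub : ContDiff ℝ 2 fun x : ℝ => x * (1 - x) :=
  contDiff_id.mul (contDiff_const.sub contDiff_id)

lemma deriv_deriv_mul_one_sub : deriv (deriv fun x : ℝ => x * (1 - x)) = fun _ => -2 := by
  have h : deriv (fun x : ℝ => x * (1 - x)) = fun x => 1 - 2 * x := by
    funext x
    rw [((hasDerivAt_id' x).fun_mul ((hasDerivAt_id' x).const_sub 1)).deriv]
    ring
  rw [h]
  funext x
  exact ((hasDerivAt_id x).const_mul 2).const_sub 1 |>.deriv.trans (by simp)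

lemma rpow_three_halves_le_mul {a K : ℝ} (ha : 0 ≤ a) (hK : 0 ≤ K) (h : a ≤ K ^ 2) :
    a ^ (3 / 2 : ℝ) ≤ a * K := by
  have hsqrt : √a ≤ K := Real.sqrt_le_iff.2 ⟨hK, h⟩
  calc a ^ (3 / 2 : ℝ) = a * √a := by
        rw [show (3 / 2 : ℝ) = 1 + 1 / 2 by norm_num, Real.rpow_add' ha (by norm_num),
          Real.rpow_one, Real.sqrt_eq_rpow]
    _ ≤ a * K := mul_le_mul_of_nonneg_left hsqrt ha

lemma integrableOn_inv_sqrt_one_sub : IntegrableOn (fun t : ℝ => (√(1 - t))⁻¹) (Ioo 0 1) := by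
  have h : IntervalIntegrable (fun t : ℝ => (1 - t) ^ (-(1 / 2) : ℝ)) volume 0 1 := by
    simpa using (intervalIntegral.intervalIntegrable_rpow' (r := -(1 / 2)) (by norm_num)
      (a := 0) (b := 1)).comp_sub_left 1 |>.symm
  refine (h.1.mono_set Ioo_subset_Ioc_self).congr_fun (fun t ht => ?_) measurableSet_Ioo
  simp only
  rw [Real.rpow_neg (sub_pos.2 ht.2).le, Real.sqrt_eq_rpow]

lemma eq_mul_one_sub_of_eq_sub_integral {h : ℝ → ℝ} {c : ℝ} (hcont : ContinuousOn h (Iio 1))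
    (heq : ∀ v ∈ Ico (0 : ℝ) 1, h v = c - ∫ r in 0..v, h r / (1 - r)) :
    ∀ t ∈ Ico (0 : ℝ) 1, h t = c * (1 - t) := by
  set q : ℝ → ℝ := fun r => h r / (1 - r)
  have hq : ContinuousOn q (Iio 1) :=
    hcont.div (continuous_const.sub continuous_id).continuousOn fun x hx => (sub_pos.2 hx).ne'
  have hderiv_h : ∀ x ∈ Ico (0 : ℝ) 1, HasDerivWithinAt h (-q x) (Ici x) x := by
    intro x hx
    have hint : IntervalIntegrable q volume 0 x :=
      (hq.mono fun y hy => (uIcc_of_le hx.1 ▸ hy).2.trans_lt hx.2).intervalIntegrable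
    have hrhs := (intervalIntegral.integral_hasDerivAt_right hint
      (hq.stronglyMeasurableAtFilter isOpen_Iio x hx.2)
      (hq.continuousAt (Iio_mem_nhds hx.2))).const_sub c
    refine hrhs.hasDerivWithinAt.congr_of_eventuallyEq ?_ (heq x hx)
    filter_upwards [self_mem_nhdsWithin, mem_nhdsWithin_of_mem_nhds (Iio_mem_nhds hx.2)]
      with s hxs hs1 using heq s ⟨hx.1.trans hxs, hs1⟩
  have hderiv_q : ∀ x ∈ Ico (0 : ℝ) 1, HasDerivWithinAt q 0 (Ici x) x := by
    intro x hx
    have h1x : 1 - x ≠ 0 := (sub_pos.2 hx.2).ne'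
    refine ((hderiv_h x hx).div ((hasDerivAt_id' x).const_sub 1).hasDerivWithinAt h1x
      ).congr_deriv ?_
    simp only [q]
    field_simp
    ring
  intro t ht
  have hq0 : q 0 = c := by simpa [q] using heq 0 ⟨le_rfl, one_pos⟩
  have hqt : q t = c := hq0 ▸ constant_of_has_deriv_right_zero
    (hq.mono fun y hy => hy.2.trans_lt ht.2)
    (fun x hx => hderiv_q x ⟨hx.1, hx.2.trans ht.2⟩) t ⟨ht.1, le_rfl⟩
  rw [← hqt]
  simp only [q]
  field_simp [(sub_pos.2 ht.2).ne']

namespace WrightFisher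

variable {Ω : Type*} {M : ℝ → Ω → ℝ}

noncomputable def sigma (M : ℝ → Ω → ℝ) (t : ℝ) (ω : Ω) : ℝ :=
  M t ω * (1 - M t ω) / (1 - t)

lemma sigma_nonneg (hrange : ∀ s ω, M s ω ∈ Icc (0 : ℝ) 1) {t : ℝ} (ht : t ≤ 1) (ω : Ω) :
    0 ≤ sigma M t ω :=
  div_nonneg (mul_nonneg (hrange t ω).1 (sub_nonneg.2 (hrange t ω).2)) (sub_nonneg.2 ht)

lemma sigma_le_inv_one_sub {t : ℝ} (ht : t < 1) (ω : Ω) : sigma M t ω ≤ (1 - t)⁻¹ := by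
  rw [sigma, div_eq_mul_inv]
  exact mul_le_of_le_one_left (inv_nonneg.2 (sub_pos.2 ht).le) (mul_one_sub_le_one _)

variable [MeasurableSpace Ω]

def SolvesMartingaleProblem (ℱ : Filtration ℝ ‹MeasurableSpace Ω›) (P : Measure Ω)
    (M : ℝ → Ω → ℝ) : Prop :=
  ∀ f : ℝ → ℝ, ContDiff ℝ 2 f → ∀ u v, 0 ≤ u → u ≤ v → v < 1 →
    P[(fun ω => f (M v ω)
        - (1/2) * ∫ r in u..v, (M r ω * (1 - M r ω) / (1 - r)) * deriv (deriv f) (M r ω))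
      | ℱ u] =ᵐ[P] fun ω => f (M u ω)

lemma measurable_sigma_uncurry (hmeas : ∀ t, Measurable (M t))
    (hcont : ∀ ω, Continuous fun t => M t ω) :
    Measurable fun p : ℝ × Ω => sigma M p.1 p.2 := by
  have hM : Measurable fun p : ℝ × Ω => M p.1 p.2 :=
    measurable_uncurry_of_continuous_of_measurable hcont hmeas
  exact (hM.mul (measurable_const.sub hM)).div (measurable_const.sub measurable_fst)

section FiniteMeasure

variable (P : Measure Ω) [IsFiniteMeasure P]

lemma integrable_mul_one_sub (hmeas : ∀ t, Measurable (M t))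
    (hrange : ∀ s ω, M s ω ∈ Icc (0 : ℝ) 1) (t : ℝ) :
    Integrable (fun ω => M t ω * (1 - M t ω)) P :=
  Integrable.of_bound ((hmeas t).mul (measurable_const.sub (hmeas t))).aestronglyMeasurable 1
    (ae_of_all _ fun ω => norm_mul_one_sub_le_one (hrange t ω))

lemma integrable_sigma (hmeas : ∀ t, Measurable (M t))
    (hrange : ∀ s ω, M s ω ∈ Icc (0 : ℝ) 1) (t : ℝ) :
    Integrable (sigma M t) P :=
  (integrable_mul_one_sub P hmeas hrange t).div_const _

lemma integrable_sigma_prod (hmeas : ∀ t, Measurable (M t))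
    (hcont : ∀ ω, Continuous fun t => M t ω) (hrange : ∀ s ω, M s ω ∈ Icc (0 : ℝ) 1)
    {v : ℝ} (hv : v < 1) :
    Integrable (Function.uncurry fun ω r => sigma M r ω)
      (P.prod (volume.restrict (Ioc 0 v))) := by
  refine Integrable.of_bound ?_ (1 - v)⁻¹ ?_
  · exact ((measurable_sigma_uncurry hmeas hcont).comp measurable_swap).aestronglyMeasurable
  · filter_upwards [Measure.quasiMeasurePreserving_snd.ae (ae_restrict_mem measurableSet_Ioc)]
      with p hp
    have hr : p.2 < 1 := hp.2.trans_lt hv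
    rw [Function.uncurry_apply_pair, Real.norm_of_nonneg (sigma_nonneg hrange hr.le _)]
    exact (sigma_le_inv_one_sub hr _).trans (inv_anti₀ (sub_pos.2 hv) (by linarith [hp.2]))

lemma continuous_integral_mul_one_sub (hmeas : ∀ t, Measurable (M t))
    (hcont : ∀ ω, Continuous fun t => M t ω) (hrange : ∀ s ω, M s ω ∈ Icc (0 : ℝ) 1) :
    Continuous fun t => ∫ ω, M t ω * (1 - M t ω) ∂P :=
  continuous_of_dominated
    (fun t => (integrable_mul_one_sub P hmeas hrange t).aestronglyMeasurable)
    (fun t => ae_of_all _ fun ω => norm_mul_one_sub_le_one (hrange t ω)) (integrable_const 1)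
    (ae_of_all _ fun ω => (hcont ω).mul (continuous_const.sub (hcont ω)))

lemma lintegral_sigma_rpow_le (hmeas : ∀ t, Measurable (M t))
    (hrange : ∀ s ω, M s ω ∈ Icc (0 : ℝ) 1) {t : ℝ} (ht : t < 1) :
    ∫⁻ ω, ENNReal.ofReal (sigma M t ω ^ (3 / 2 : ℝ)) ∂P
      ≤ ENNReal.ofReal ((∫ ω, sigma M t ω ∂P) * (√(1 - t))⁻¹) := by
  set K := (√(1 - t))⁻¹
  have hK : 0 ≤ K := by positivity
  have hK_sq : (1 - t)⁻¹ = K ^ 2 := by rw [inv_pow, Real.sq_sqrt (sub_pos.2 ht).le]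
  calc ∫⁻ ω, ENNReal.ofReal (sigma M t ω ^ (3 / 2 : ℝ)) ∂P
      ≤ ∫⁻ ω, ENNReal.ofReal (sigma M t ω * K) ∂P :=
        lintegral_mono fun ω => ENNReal.ofReal_le_ofReal <|
          rpow_three_halves_le_mul (sigma_nonneg hrange ht.le ω) hK
            (hK_sq ▸ sigma_le_inv_one_sub ht ω)
    _ = ENNReal.ofReal (∫ ω, sigma M t ω * K ∂P) :=
        (ofReal_integral_eq_lintegral_ofReal ((integrable_sigma P hmeas hrange t).mul_const K)
          (ae_of_all _ fun ω => mul_nonneg (sigma_nonneg hrange ht.le ω) hK)).symm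
    _ = ENNReal.ofReal ((∫ ω, sigma M t ω ∂P) * K) := by rw [integral_mul_const]

end FiniteMeasure

section MartingaleProblem

variable {ℱ : Filtration ℝ ‹MeasurableSpace Ω›} (P : Measure Ω) [IsProbabilityMeasure P]
  {x₀ : ℝ}

lemma integral_mul_one_sub_eq_sub_integral (hMP : SolvesMartingaleProblem ℱ P M)
    (hM0 : ∀ ω, M 0 ω = x₀) (hrange : ∀ s ω, M s ω ∈ Icc (0 : ℝ) 1)
    (hmeas : ∀ t, Measurable (M t)) (hcont : ∀ ω, Continuous fun t => M t ω)
    {v : ℝ} (hv : v ∈ Ico (0 : ℝ) 1) :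
    ∫ ω, M v ω * (1 - M v ω) ∂P
      = x₀ * (1 - x₀) - ∫ r in 0..v, (∫ ω, M r ω * (1 - M r ω) ∂P) / (1 - r) := by
  have hcondExp : P[fun ω => M v ω * (1 - M v ω) + ∫ r in Ioc 0 v, sigma M r ω | ℱ 0]
      =ᵐ[P] fun _ => x₀ * (1 - x₀) := by
    have h := hMP _ contDiff_mul_one_sub 0 v le_rfl hv.1 hv.2
    simp only [deriv_deriv_mul_one_sub, hM0, intervalIntegral.integral_of_le hv.1,
      integral_mul_const] at h
    convert h using 3 with ω
    simp only [sigma]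
    ring
  have hprod := integrable_sigma_prod P hmeas hcont hrange hv.2
  have hsection : Integrable (fun ω => ∫ r in Ioc 0 v, sigma M r ω) P :=
    hprod.integral_prod_left
  have hmean : ∫ ω, (M v ω * (1 - M v ω) + ∫ r in Ioc 0 v, sigma M r ω) ∂P
      = x₀ * (1 - x₀) := by
    rw [← integral_condExp (ℱ.le 0), integral_congr_ae hcondExp]
    simp
  rw [integral_add (integrable_mul_one_sub P hmeas hrange v) hsection,
    integral_integral_swap hprod] at hmean
  simp only [sigma, integral_div] at hmean
  rw [intervalIntegral.integral_of_le hv.1]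
  linarith

lemma integral_sigma_eq (hMP : SolvesMartingaleProblem ℱ P M)
    (hM0 : ∀ ω, M 0 ω = x₀) (hrange : ∀ s ω, M s ω ∈ Icc (0 : ℝ) 1)
    (hmeas : ∀ t, Measurable (M t)) (hcont : ∀ ω, Continuous fun t => M t ω)
    {t : ℝ} (ht : t ∈ Ico (0 : ℝ) 1) :
    ∫ ω, sigma M t ω ∂P = x₀ * (1 - x₀) := by
  have h := eq_mul_one_sub_of_eq_sub_integral
    (continuous_integral_mul_one_sub P hmeas hcont hrange).continuousOn
    (fun v hv => integral_mul_one_sub_eq_sub_integral P hMP hM0 hrange hmeas hcont hv) t ht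
  simp only [sigma, integral_div, h]
  field_simp [(sub_pos.2 ht.2).ne']

end MartingaleProblem

end WrightFisher

open WrightFisher

theorem stmt_17_general {Ω : Type*} {m0 : MeasurableSpace Ω} (ℱ : Filtration ℝ m0)
    (P : Measure Ω) [IsProbabilityMeasure P] (M : ℝ → Ω → ℝ) (x₀ : ℝ)
    (hM0 : ∀ ω, M 0 ω = x₀)
    (hrange : ∀ s ω, M s ω ∈ Set.Icc (0:ℝ) 1)
    (hadapted : Adapted ℱ M)
    (hcont : ∀ ω, Continuous fun s => M s ω)
    (hMP : ∀ f : ℝ → ℝ, ContDiff ℝ 2 f → ∀ u v, 0 ≤ u → u ≤ v → v < 1 →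
      P[(fun ω => f (M v ω)
          - (1/2) * ∫ r in u..v, (M r ω * (1 - M r ω) / (1 - r)) * deriv (deriv f) (M r ω))
        | ℱ u] =ᵐ[P] fun ω => f (M u ω)) :
    ∫⁻ ω, (∫⁻ t in Set.Ioo (0:ℝ) 1,
        ENNReal.ofReal ((M t ω * (1 - M t ω) / (1 - t)) ^ ((3:ℝ)/2))) ∂P < ⊤ := by
  have hmeas : ∀ t, Measurable (M t) := fun t => (hadapted t).mono (ℱ.le t) le_rfl
  change ∫⁻ ω, (∫⁻ t in Ioo 0 1, ENNReal.ofReal (sigma M t ω ^ (3 / 2 : ℝ))) ∂P < ⊤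
  rw [lintegral_lintegral_swap (((measurable_sigma_uncurry hmeas hcont).comp
    measurable_swap).pow_const _).ennreal_ofReal.aemeasurable]
  refine lt_of_le_of_lt (setLIntegral_mono' measurableSet_Ioo fun t ht => ?_)
    (integrableOn_inv_sqrt_one_sub.const_mul (x₀ * (1 - x₀))).lintegral_lt_top
  rw [← integral_sigma_eq P hMP hM0 hrange hmeas hcont (Ioo_subset_Ico_self ht)]
  exact lintegral_sigma_rpow_le P hmeas hrange ht.2

/-- For the scaled neutral Wright–Fisher diffusion `dM_t = √(M_t(1−M_t)/(1−t)) dB_t`,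
`M_0 = x₀ ∈ (0,1)` (encoded through its martingale problem), and
`Σ_t = M_t(1−M_t)/(1−t)`, one has `E[∫_0^1 Σ_t^{3/2} dt] < ∞`. -/
theorem stmt_17 {Ω : Type*} {m0 : MeasurableSpace Ω} (ℱ : Filtration ℝ m0)
    (P : Measure Ω) [IsProbabilityMeasure P] (M : ℝ → Ω → ℝ) (x₀ : ℝ)
    (hx : x₀ ∈ Set.Ioo (0:ℝ) 1)
    (hM0 : ∀ ω, M 0 ω = x₀)
    (hrange : ∀ s ω, M s ω ∈ Set.Icc (0:ℝ) 1)
    (hadapted : Adapted ℱ M)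
    (hcont : ∀ ω, Continuous fun s => M s ω)
    (hMP : ∀ f : ℝ → ℝ, ContDiff ℝ 2 f → ∀ u v, 0 ≤ u → u ≤ v → v < 1 →
      P[(fun ω => f (M v ω)
          - (1/2) * ∫ r in u..v, (M r ω * (1 - M r ω) / (1 - r)) * deriv (deriv f) (M r ω))
        | ℱ u] =ᵐ[P] fun ω => f (M u ω)) :
    ∫⁻ ω, (∫⁻ t in Set.Ioo (0:ℝ) 1,
        ENNReal.ofReal ((M t ω * (1 - M t ω) / (1 - t)) ^ ((3:ℝ)/2))) ∂P < ⊤ :=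
  stmt_17_general ℱ P M x₀ hM0 hrange hadapted hcont hMP
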